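/- arXiv:2605.15382 — 2 statements merged into one kernel-verified Lean document; each statement's English description precedes it below -/
import Mathlib

section
/- The discrete Fokker–Planck operator is negative semidefinite in the weighted inner product with weight 1/m: for all f ∈ ℝ^N, ∑_k (Jf)_k f_k / m_k ≤ 0, where J is the tridiagonal matrix defined from positive weights m with zero-flux boundary conditions. -/
/-- The flux-form discrete Fokker–Planck operator is negative semidefinite in the
weighted inner product with weight `1/m`:
`⟨Jf, f/m⟩ = -(T/(2Δv²)) ∑_{k=1}^{N-1} (m_k+m_{k+1})(f_{k+1}/m_{k+1} - f_k/m_k)² ≤ 0`,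
where `(Jf)_k = F_{k+1/2} - F_{k-1/2}` with zero boundary fluxes. -/
theorem discrete_fokkerPlanck_negative_semidefinite
    (N : ℕ) (hN : 2 ≤ N) (Δv T : ℝ) (hΔv : 0 < Δv) (hT : 0 < T)
    (m : ℤ → ℝ) (hm : ∀ k : ℤ, 1 ≤ k → k ≤ (N : ℤ) → 0 < m k)
    (f : ℤ → ℝ)
    (F : ℤ → ℝ)
    (hF : ∀ k : ℤ, F k =
      if 1 ≤ k ∧ k ≤ (N : ℤ) - 1 then
        (T / (2 * Δv ^ 2)) * (m k + m (k + 1)) * (f (k + 1) / m (k + 1) - f k / m k)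
      else 0) :
    (∑ k ∈ Finset.Icc (1 : ℤ) (N : ℤ), (F k - F (k - 1)) * f k / m k) =
      -(T / (2 * Δv ^ 2)) * ∑ k ∈ Finset.Icc (1 : ℤ) ((N : ℤ) - 1),
        (m k + m (k + 1)) * (f (k + 1) / m (k + 1) - f k / m k) ^ 2 ∧
    (∑ k ∈ Finset.Icc (1 : ℤ) (N : ℤ), (F k - F (k - 1)) * f k / m k) ≤ 0 := by
  have hN' : (2 : ℤ) ≤ (N : ℤ) := by exact_mod_cast hN
  set g : ℤ → ℝ := fun k => f k / m k with hg
  have hF0 : F 0 = 0 := by rw [hF]; simp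
  have hFN : F (N : ℤ) = 0 := by rw [hF, if_neg (by omega)]
  -- split the total sum
  have key : (∑ k ∈ Finset.Icc (1 : ℤ) (N : ℤ), (F k - F (k - 1)) * f k / m k)
      = ∑ k ∈ Finset.Icc (1 : ℤ) ((N : ℤ) - 1), F k * (g k - g (k + 1)) := by
    have hsplit : ∀ k : ℤ, (F k - F (k - 1)) * f k / m k = F k * g k - F (k - 1) * g k := by
      intro k; rw [mul_div_assoc]; ring
    simp only [hsplit, Finset.sum_sub_distrib]
    have h1 : Finset.Icc (1 : ℤ) (N : ℤ) = insert (N : ℤ) (Finset.Icc 1 ((N : ℤ) - 1)) := by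
      ext x; simp [Finset.mem_Icc]; omega
    have h2 : ∑ k ∈ Finset.Icc (1 : ℤ) (N : ℤ), F (k - 1) * g k
        = ∑ k ∈ Finset.Icc (0 : ℤ) ((N : ℤ) - 1), F k * g (k + 1) := by
      apply Finset.sum_nbij' (fun k => k - 1) (fun k => k + 1) <;>
        intros <;> simp_all [Finset.mem_Icc] <;> omega
    have h3 : Finset.Icc (0 : ℤ) ((N : ℤ) - 1) = insert (0 : ℤ) (Finset.Icc 1 ((N : ℤ) - 1)) := by
      ext x; simp [Finset.mem_Icc]; omega
    rw [h2, h1, h3, Finset.sum_insert (by simp), Finset.sum_insert (by simp [Finset.mem_Icc])]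
    rw [hFN, hF0]
    simp [Finset.sum_sub_distrib, mul_sub]
  have hterm : ∀ k ∈ Finset.Icc (1 : ℤ) ((N : ℤ) - 1),
      F k * (g k - g (k + 1)) =
        -(T / (2 * Δv ^ 2)) * ((m k + m (k + 1)) * (f (k + 1) / m (k + 1) - f k / m k) ^ 2) := by
    intro k hk
    simp only [Finset.mem_Icc] at hk
    rw [hF k, if_pos ⟨hk.1, hk.2⟩]
    simp only [hg]
    ring
  have heq : (∑ k ∈ Finset.Icc (1 : ℤ) (N : ℤ), (F k - F (k - 1)) * f k / m k)
      = -(T / (2 * Δv ^ 2)) * ∑ k ∈ Finset.Icc (1 : ℤ) ((N : ℤ) - 1),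
          (m k + m (k + 1)) * (f (k + 1) / m (k + 1) - f k / m k) ^ 2 := by
    rw [key, Finset.sum_congr rfl hterm, ← Finset.mul_sum]
  refine ⟨heq, ?_⟩
  rw [heq]
  have hc : 0 < T / (2 * Δv ^ 2) := by positivity
  have hsum : 0 ≤ ∑ k ∈ Finset.Icc (1 : ℤ) ((N : ℤ) - 1),
      (m k + m (k + 1)) * (f (k + 1) / m (k + 1) - f k / m k) ^ 2 := by
    apply Finset.sum_nonneg
    intro k hk
    simp only [Finset.mem_Icc] at hk
    have h1 := hm k hk.1 (by omega)
    have h2 := hm (k + 1) (by omega) (by omega)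
    positivity
  nlinarith
end

section
/- Solvability of the three-term tensor Sylvester equation under spectral separation: if W₁ and W₃ are upper triangular and for all i, j the matrix L₂ + ((W₁)_{ii} + (W₃)_{jj}) I is invertible, then for every E there is a unique tensor Z (indexed by Fin r₁ × Fin N × Fin r₂) satisfying Z ×₁ W₁ + Z ×₂ L₂ + Z ×₃ W₃ = E, where (Z ×₁ W₁)_{i,n,j} = ∑_p Z_{p,n,j}(W₁)_{pi}, (Z ×₂ L₂)_{i,n,j} = ∑_m Z_{i,m,j}(L₂)_{mn}, (Z ×₃ W₃)_{i,n,j} = ∑_q Z_{i,n,q}(W₃)_{qj}. -/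
open Finset

lemma sum_split_aux {k : ℕ} (i : Fin k) (f : Fin k → ℂ) (h : ∀ p, i < p → f p = 0) :
    ∑ p, f p = (∑ p ∈ Finset.univ.filter (fun p => p < i), f p) + f i := by
  rw [← Finset.sum_filter_add_sum_filter_not Finset.univ (fun p => p ≤ i)]
  have h1 : ∑ p ∈ Finset.univ.filter (fun p => ¬ p ≤ i), f p = 0 :=
    Finset.sum_eq_zero fun p hp => h p (by simpa using (Finset.mem_filter.mp hp).2)
  have h2 : Finset.univ.filter (fun p : Fin k => p ≤ i)
      = insert i (Finset.univ.filter (fun p => p < i)) := by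
    ext p
    simp [le_iff_lt_or_eq]
    tauto
  rw [h1, h2, Finset.sum_insert (by simp)]
  ring

/-- Solvability of the three-term tensor Sylvester equation under spectral
separation: if `W₁`, `W₃` are upper triangular and `L₂ᵀ + ((W₁)_{ii}+(W₃)_{jj}) I`
is invertible for all `i, j`, then `Z ×₁ W₁ + Z ×₂ L₂ + Z ×₃ W₃ = E` has a unique
solution, whose mode-2 fibers satisfy the back-substitution recursion. -/
theorem tensor_sylvester_triangular_solvability
    (r₁ N r₂ : ℕ)
    (W₁ : Matrix (Fin r₁) (Fin r₁) ℂ) (W₃ : Matrix (Fin r₂) (Fin r₂) ℂ)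
    (L₂ : Matrix (Fin N) (Fin N) ℂ)
    (E : Fin r₁ → Fin N → Fin r₂ → ℂ)
    (hW₁ : ∀ p i : Fin r₁, i < p → W₁ p i = 0)
    (hW₃ : ∀ q j : Fin r₂, j < q → W₃ q j = 0)
    (hinv : ∀ (i : Fin r₁) (j : Fin r₂),
      IsUnit (L₂.transpose + (W₁ i i + W₃ j j) • (1 : Matrix (Fin N) (Fin N) ℂ))) :
    (∃! Z : Fin r₁ → Fin N → Fin r₂ → ℂ,
      ∀ (i : Fin r₁) (n : Fin N) (j : Fin r₂),
        (∑ p, Z p n j * W₁ p i) + (∑ m, Z i m j * L₂ m n) + (∑ q, Z i n q * W₃ q j)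
          = E i n j) ∧
    (∀ Z : Fin r₁ → Fin N → Fin r₂ → ℂ,
      (∀ (i : Fin r₁) (n : Fin N) (j : Fin r₂),
        (∑ p, Z p n j * W₁ p i) + (∑ m, Z i m j * L₂ m n) + (∑ q, Z i n q * W₃ q j)
          = E i n j) →
      ∀ (i : Fin r₁) (j : Fin r₂),
        (L₂.transpose + (W₁ i i + W₃ j j) • (1 : Matrix (Fin N) (Fin N) ℂ)).mulVec
            (fun n => Z i n j) =
          fun n => E i n j - ∑ p ∈ univ.filter (fun p : Fin r₁ => p < i), W₁ p i * Z p n j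
            - ∑ q ∈ univ.filter (fun q : Fin r₂ => q < j), W₃ q j * Z i n q) := by
  -- general recursion fact
  have key : ∀ (F : Fin r₁ → Fin N → Fin r₂ → ℂ) (Z : Fin r₁ → Fin N → Fin r₂ → ℂ),
      (∀ (i : Fin r₁) (n : Fin N) (j : Fin r₂),
        (∑ p, Z p n j * W₁ p i) + (∑ m, Z i m j * L₂ m n) + (∑ q, Z i n q * W₃ q j)
          = F i n j) →
      ∀ (i : Fin r₁) (j : Fin r₂),
        (L₂.transpose + (W₁ i i + W₃ j j) • (1 : Matrix (Fin N) (Fin N) ℂ)).mulVec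
            (fun n => Z i n j) =
          fun n => F i n j - ∑ p ∈ univ.filter (fun p : Fin r₁ => p < i), W₁ p i * Z p n j
            - ∑ q ∈ univ.filter (fun q : Fin r₂ => q < j), W₃ q j * Z i n q := by
    intro F Z hZ i j
    funext n
    have e1 : ∑ p, Z p n j * W₁ p i
        = (∑ p ∈ univ.filter (fun p : Fin r₁ => p < i), W₁ p i * Z p n j)
          + Z i n j * W₁ i i := by
      rw [sum_split_aux i (fun p => Z p n j * W₁ p i)
        (fun p hp => by show Z p n j * W₁ p i = 0; rw [hW₁ p i hp, mul_zero])]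
      simp [mul_comm]
    have e3 : ∑ q, Z i n q * W₃ q j
        = (∑ q ∈ univ.filter (fun q : Fin r₂ => q < j), W₃ q j * Z i n q)
          + Z i n j * W₃ j j := by
      rw [sum_split_aux j (fun q => Z i n q * W₃ q j)
        (fun q hq => by show Z i n q * W₃ q j = 0; rw [hW₃ q j hq, mul_zero])]
      simp [mul_comm]
    have hmv : (L₂.transpose + (W₁ i i + W₃ j j) • (1 : Matrix (Fin N) (Fin N) ℂ)).mulVec
        (fun n => Z i n j) n
        = (∑ m, Z i m j * L₂ m n) + (W₁ i i + W₃ j j) * Z i n j := by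
      simp [Matrix.mulVec, dotProduct, Matrix.add_apply, Matrix.smul_apply,
        Matrix.one_apply, Matrix.transpose_apply, add_mul, mul_add, mul_ite, mul_zero,
        Finset.sum_add_distrib, Finset.sum_ite_eq, mul_comm]
    rw [hmv]
    have h := hZ i n j
    rw [e1, e3] at h
    linear_combination h
  -- kernel triviality
  have hker : ∀ Z : Fin r₁ → Fin N → Fin r₂ → ℂ,
      (∀ (i : Fin r₁) (n : Fin N) (j : Fin r₂),
        (∑ p, Z p n j * W₁ p i) + (∑ m, Z i m j * L₂ m n) + (∑ q, Z i n q * W₃ q j) = 0) →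
      Z = 0 := by
    intro Z hZ
    have main : ∀ (k : ℕ) (i : Fin r₁) (j : Fin r₂), i.val + j.val = k → ∀ n, Z i n j = 0 := by
      intro k
      induction k using Nat.strong_induction_on with
      | _ k ih =>
        intro i j hk
        have h := key (fun _ _ _ => 0) Z (fun i n j => hZ i n j) i j
        have hrhs : (fun n => (fun _ _ _ => (0:ℂ)) i n j
            - ∑ p ∈ univ.filter (fun p : Fin r₁ => p < i), W₁ p i * Z p n j
            - ∑ q ∈ univ.filter (fun q : Fin r₂ => q < j), W₃ q j * Z i n q)
            = (fun _ : Fin N => (0:ℂ)) := by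
          funext n
          have h1 : ∑ p ∈ univ.filter (fun p : Fin r₁ => p < i), W₁ p i * Z p n j = 0 :=
            Finset.sum_eq_zero fun p hp => by
              have hp' : p.val < i.val := (Finset.mem_filter.mp hp).2
              rw [ih (p.val + j.val) (by omega) p j rfl n, mul_zero]
          have h2 : ∑ q ∈ univ.filter (fun q : Fin r₂ => q < j), W₃ q j * Z i n q = 0 :=
            Finset.sum_eq_zero fun q hq => by
              have hq' : q.val < j.val := (Finset.mem_filter.mp hq).2
              rw [ih (i.val + q.val) (by omega) i q rfl n, mul_zero]
          simp [h1, h2]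
        have h0 : (L₂.transpose + (W₁ i i + W₃ j j) • (1 : Matrix (Fin N) (Fin N) ℂ)).mulVec
            (fun n => Z i n j) = 0 := by
          rw [h, hrhs]; rfl
        obtain ⟨u, hu⟩ := hinv i j
        have hv : (fun n => Z i n j) = 0 := by
          calc (fun n => Z i n j)
              = (1 : Matrix (Fin N) (Fin N) ℂ).mulVec (fun n => Z i n j) := by
                rw [Matrix.one_mulVec]
            _ = ((↑u⁻¹ * ↑u : Matrix (Fin N) (Fin N) ℂ)).mulVec (fun n => Z i n j) := by
                rw [u.inv_mul]
            _ = (↑u⁻¹ : Matrix (Fin N) (Fin N) ℂ).mulVec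
                  ((↑u : Matrix (Fin N) (Fin N) ℂ).mulVec (fun n => Z i n j)) := by
                rw [← Matrix.mulVec_mulVec]
            _ = 0 := by rw [hu, h0, Matrix.mulVec_zero]
        intro n
        exact congrFun hv n
    funext i n j
    exact main (i.val + j.val) i j rfl n
  -- the linear map
  set T : (Fin r₁ → Fin N → Fin r₂ → ℂ) →ₗ[ℂ] (Fin r₁ → Fin N → Fin r₂ → ℂ) :=
    { toFun := fun Z i n j =>
        (∑ p, Z p n j * W₁ p i) + (∑ m, Z i m j * L₂ m n) + (∑ q, Z i n q * W₃ q j)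
      map_add' := by
        intro x y; funext i n j
        simp only [Pi.add_apply, add_mul, Finset.sum_add_distrib]
        ring
      map_smul' := by
        intro c x; funext i n j
        simp only [Pi.smul_apply, smul_eq_mul, RingHom.id_apply, Finset.mul_sum, mul_add,
          mul_assoc] } with hT
  have hTapp : ∀ (Z : Fin r₁ → Fin N → Fin r₂ → ℂ) (i n j), T Z i n j =
      (∑ p, Z p n j * W₁ p i) + (∑ m, Z i m j * L₂ m n) + (∑ q, Z i n q * W₃ q j) :=
    fun Z i n j => rfl
  have hTinj : Function.Injective T := by
    intro x y hxy
    have h0 : T (x - y) = 0 := by rw [LinearMap.map_sub, hxy, sub_self]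
    have hk := hker (x - y) (fun i n j => congrFun (congrFun (congrFun h0 i) n) j)
    exact sub_eq_zero.mp hk
  have hTsurj : Function.Surjective T := (LinearMap.injective_iff_surjective).mp hTinj
  obtain ⟨Z₀, hZ₀⟩ := hTsurj E
  have hZ₀' : ∀ (i : Fin r₁) (n : Fin N) (j : Fin r₂),
      (∑ p, Z₀ p n j * W₁ p i) + (∑ m, Z₀ i m j * L₂ m n) + (∑ q, Z₀ i n q * W₃ q j)
        = E i n j := fun i n j => congrFun (congrFun (congrFun hZ₀ i) n) j
  refine ⟨⟨Z₀, hZ₀', ?_⟩, fun Z hZ i j => key E Z hZ i j⟩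
  intro Y hY
  apply hTinj
  have hTY : T Y = E := by funext i n j; exact hY i n j
  rw [hTY, hZ₀]
end
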